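/- arXiv:1211.3604 — 3 statements merged into one kernel-verified Lean document; each statement's English description precedes it below -/
import Mathlib

section
/- Let ρ ∈ F_{q^t} with N_{q^t/q}(ρ) ≠ 1, where t ≥ 3. Then the F_q-subspace W = { (x, ρx^q + x^{q^{t-1}}) : x ∈ F_{q^t} } of F_{q^t}² defines a scattered F_q-linear set of rank t of PG(1, q^t); that is, for every nonzero x ∈ F_{q^t} and every λ ∈ F_{q^t} \ F_q, the vector λ·(x, ρx^q + x^{q^{t-1}}) is not of the form (y, ρy^q + y^{q^{t-1}}) for any y ∈ F_{q^t}. -/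
/-- For `N_{q^t/q}(ρ) ≠ 1`, the subspace `{(x, ρ x^q + x^{q^{t-1}})}` defines a scattered
`F_q`-linear set of rank `t` of `PG(1,q^t)`. -/
theorem stmt_7 (p e t q : ℕ) (hp : p.Prime) (he : 0 < e) (ht : 3 ≤ t) (hq : q = p ^ e)
    (K : Type) [Field K] [Fintype K] (hK : Fintype.card K = q ^ t)
    (ρ : K) (hρ : ρ ^ ((q ^ t - 1) / (q - 1)) ≠ 1) :
    ∀ x : K, x ≠ 0 → ∀ lam : K, lam ^ q ≠ lam → ∀ y : K,
      (lam * x, lam * (ρ * x ^ q + x ^ q ^ (t - 1))) ≠ (y, ρ * y ^ q + y ^ q ^ (t - 1)) := by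
  intro x hx lam hlam y heq
  have hq2 : 2 ≤ q := by
    rw [hq]; calc 2 ≤ p := hp.two_le
      _ ≤ p ^ e := Nat.le_self_pow he.ne' p
  have ht0 : 0 < t := by omega
  -- characteristic of K is p
  haveI : CharP K (ringChar K) := ringChar.charP K
  have hrprime : (ringChar K).Prime := CharP.char_is_prime K (ringChar K)
  haveI : Fact (ringChar K).Prime := ⟨hrprime⟩
  obtain ⟨n, hn⟩ := FiniteField.card K (ringChar K)
  have hrp : ringChar K = p := by
    have hdvd : p ∣ (ringChar K) ^ (n : ℕ) := by
      rw [← hn.2, hK, hq, ← pow_mul]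
      exact dvd_pow_self p (by positivity)
    have := hp.dvd_of_dvd_pow hdvd
    exact ((Nat.prime_dvd_prime_iff_eq hp hrprime).mp this).symm
  haveI hcharP : CharP K p := hrp ▸ ringChar.charP K
  haveI : Fact p.Prime := ⟨hp⟩
  haveI : ExpChar K p := ExpChar.prime hp
  set s := (q ^ t - 1) / (q - 1) with hs
  have hsmul : s * (q - 1) = q ^ t - 1 := by
    apply Nat.div_mul_cancel
    have := Nat.sub_dvd_pow_sub_pow q 1 t
    simpa using this
  have hcardpow : ∀ z : K, z ^ q ^ t = z := by
    intro z; rw [← hK]; exact FiniteField.pow_card z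
  have hpow1 : ∀ z : K, z ≠ 0 → z ^ (q ^ t - 1) = 1 := by
    intro z hz; rw [← hK]; exact FiniteField.pow_card_sub_one_eq_one z hz
  -- s-th powers are fixed by q-power Frobenius
  have hstab1 : ∀ z : K, z ≠ 0 → (z ^ s) ^ q = z ^ s := by
    intro z hz
    have h1 : (z ^ s) ^ (q - 1) = 1 := by
      rw [← pow_mul, hsmul, hpow1 z hz]
    calc (z ^ s) ^ q = (z ^ s) ^ (q - 1) * z ^ s := by
          rw [← pow_succ]; congr 1; omega
      _ = z ^ s := by rw [h1, one_mul]
  have hstab : ∀ z : K, z ≠ 0 → ∀ k : ℕ, (z ^ s) ^ q ^ k = z ^ s := by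
    intro z hz k
    induction k with
    | zero => simp
    | succ k ih => rw [pow_succ, pow_mul, ih, hstab1 z hz]
  -- Frobenius additivity at exponent q^(t-1)
  have hfrob : ∀ a b : K, (a - b) ^ q ^ (t - 1) = a ^ q ^ (t - 1) - b ^ q ^ (t - 1) := by
    intro a b
    rw [hq, ← pow_mul]
    exact sub_pow_char_pow a b (e * (t - 1))
  obtain ⟨hy, h2⟩ := Prod.mk.injEq _ _ _ _ ▸ heq
  rw [← hy, mul_pow, mul_pow] at h2
  have h3 : ρ * x ^ q * (lam - lam ^ q)
      = x ^ q ^ (t - 1) * (lam ^ q ^ (t - 1) - lam) := by linear_combination h2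
  set d := lam - lam ^ q with hd
  have hdne : d ≠ 0 := sub_ne_zero.mpr hlam.symm
  have hdpow : lam ^ q ^ (t - 1) - lam = d ^ q ^ (t - 1) := by
    rw [hd, hfrob, ← pow_mul]
    congr 1
    have h5 : q ^ (t - 1) * q = q ^ t := by
      rw [← pow_succ]; congr 1; omega
    rw [mul_comm q (q ^ (t - 1)), h5, hcardpow]
  rw [hdpow] at h3
  have h4 : (ρ * x ^ q * d) ^ s = (x ^ q ^ (t - 1) * d ^ q ^ (t - 1)) ^ s := by rw [h3]
  rw [mul_pow, mul_pow, mul_pow] at h4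
  have e1 : (x ^ q) ^ s = x ^ s := by rw [← pow_mul, mul_comm, pow_mul, hstab1 x hx]
  have e2 : (x ^ q ^ (t - 1)) ^ s = x ^ s := by
    rw [← pow_mul, mul_comm, pow_mul, hstab x hx]
  have e3 : (d ^ q ^ (t - 1)) ^ s = d ^ s := by
    rw [← pow_mul, mul_comm, pow_mul, hstab d hdne]
  rw [e1, e2, e3] at h4
  have hxs : x ^ s ≠ 0 := pow_ne_zero s hx
  have hds : d ^ s ≠ 0 := pow_ne_zero s hdne
  apply hρ
  have : ρ ^ s * (x ^ s * d ^ s) = 1 * (x ^ s * d ^ s) := by linear_combination h4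
  exact mul_right_cancel₀ (mul_ne_zero hxs hds) this
end

section
/- Let t ≥ 3 and let σ ∈ Aut(F_{q^t}) with fixed field F_q. Let a, b, c, d ∈ F_{q^t} with ad ≠ bc, and suppose N_{q^t/q}(μb + ρμ^q d) = N_{q^t/q}(μa + ρμ^q c) for all μ ∈ F_{q^t}, where ρ ∈ F_{q^t}^* and q ≥ 3. Then either b = c = 0 or a = d = 0. -/
open Polynomial Finset

private lemma geom_aux (q : ℕ) (hq : 1 ≤ q) (k : ℕ) :
    (q - 1) * ∑ i ∈ Finset.range k, q ^ i + 1 = q ^ k := by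
  induction k with
  | zero => simp
  | succ k ih =>
    rw [Finset.sum_range_succ, Nat.mul_add, pow_succ]
    have h2 : (q - 1) * q ^ k + q ^ k = q ^ k * q := by
      have h3 : q - 1 + 1 = q := by omega
      calc (q - 1) * q ^ k + q ^ k = (q - 1 + 1) * q ^ k := by ring
        _ = q ^ k * q := by rw [h3]; ring
    linarith [ih, h2]

private lemma subset_sum_one {q : ℕ} (hq : 2 ≤ q) {S : Finset ℕ}
    (h : ∑ i ∈ S, q ^ i = 1) : S = {0} := by
  have h0 : 0 ∈ S := by
    by_contra h0
    have hdvd : q ∣ ∑ i ∈ S, q ^ i :=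
      Finset.dvd_sum fun i hi => dvd_pow_self q (by rintro rfl; exact h0 hi)
    rw [h] at hdvd
    exact absurd (Nat.le_of_dvd one_pos hdvd) (by omega)
  have h1 : ∑ i ∈ S.erase 0, q ^ i + q ^ 0 = 1 := by
    rw [Finset.sum_erase_add S _ h0, h]
  have h2 : ∑ i ∈ S.erase 0, q ^ i = 0 := by simpa using h1
  have h3 : S.erase 0 = ∅ := by
    by_contra h3
    obtain ⟨j, hj⟩ := Finset.nonempty_of_ne_empty h3
    have hle : q ^ j ≤ ∑ i ∈ S.erase 0, q ^ i :=
      Finset.single_le_sum (f := fun i => q ^ i) (fun i _ => Nat.zero_le _) hj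
    have hpos : 0 < q ^ j := pow_pos (by omega) j
    omega
  rcases (Finset.erase_eq_empty_iff S 0).mp h3 with h4 | h4
  · exact absurd (h4 ▸ h0) (Finset.notMem_empty 0)
  · exact h4

private lemma subset_sum_q1 {q : ℕ} (hq : 2 ≤ q) {S : Finset ℕ}
    (h : ∑ i ∈ S, q ^ i = q + 1) : S = {0, 1} := by
  have h0 : 0 ∈ S := by
    by_contra h0
    have hdvd : q ∣ ∑ i ∈ S, q ^ i :=
      Finset.dvd_sum fun i hi => dvd_pow_self q (by rintro rfl; exact h0 hi)
    rw [h] at hdvd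
    have : q ∣ 1 := (Nat.dvd_add_right (dvd_refl q)).mp hdvd
    exact absurd (Nat.le_of_dvd one_pos this) (by omega)
  have h2 : ∑ i ∈ S.erase 0, q ^ i = q := by
    have := Finset.sum_erase_add S (fun i => q ^ i) h0
    simp only [pow_zero] at this
    omega
  have h1 : 1 ∈ S.erase 0 := by
    by_contra h1
    have hdvd : q ^ 2 ∣ ∑ i ∈ S.erase 0, q ^ i := by
      refine Finset.dvd_sum fun i hi => pow_dvd_pow q ?_
      have hi0 : i ≠ 0 := Finset.ne_of_mem_erase hi
      have hi1 : i ≠ 1 := by rintro rfl; exact h1 hi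
      omega
    rw [h2] at hdvd
    have hle := Nat.le_of_dvd (by omega) hdvd
    nlinarith
  have h3 : ∑ i ∈ (S.erase 0).erase 1, q ^ i = 0 := by
    have := Finset.sum_erase_add (S.erase 0) (fun i => q ^ i) h1
    simp only [pow_one] at this
    omega
  have h4 : (S.erase 0).erase 1 = ∅ := by
    by_contra h4
    obtain ⟨j, hj⟩ := Finset.nonempty_of_ne_empty h4
    have hle : q ^ j ≤ ∑ i ∈ (S.erase 0).erase 1, q ^ i :=
      Finset.single_le_sum (f := fun i => q ^ i) (fun i _ => Nat.zero_le _) hj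
    have hpos : 0 < q ^ j := pow_pos (by omega) j
    omega
  have h5 : S.erase 0 = {1} := by
    rcases (Finset.erase_eq_empty_iff (S.erase 0) 1).mp h4 with h5 | h5
    · exact absurd (h5 ▸ h1) (Finset.notMem_empty 1)
    · exact h5
  have := Finset.insert_erase h0
  rw [h5] at this
  rw [← this]

private def rexp (q t i : ℕ) : ℕ := if i = t then 1 else q ^ i

private lemma exp_unique (q t v : ℕ) (hq : 3 ≤ q) (ht : 2 ≤ t) (hv : 0 < v)
    (S : Finset ℕ) (hS : S ⊆ Finset.range t)
    (hE : ∑ i ∈ S, rexp q t (i + 1) + ∑ i ∈ Finset.range t \ S, rexp q t i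
        = (q - 1) * v + ∑ i ∈ Finset.range t, rexp q t i) :
    ∑ i ∈ S, q ^ i = v := by
  have hsdiff : ∑ i ∈ Finset.range t \ S, rexp q t i + ∑ i ∈ S, rexp q t i
      = ∑ i ∈ Finset.range t, rexp q t i := Finset.sum_sdiff hS
  have hE'' : ∑ i ∈ S, rexp q t (i + 1) = (q - 1) * v + ∑ i ∈ S, rexp q t i := by omega
  by_cases hm : t - 1 ∈ S
  · exfalso
    have ht1 : t - 1 + 1 = t := by omega
    have h1 : ∑ i ∈ S.erase (t - 1), rexp q t (i + 1) + rexp q t (t - 1 + 1)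
        = ∑ i ∈ S, rexp q t (i + 1) := Finset.sum_erase_add S _ hm
    have h2 : ∑ i ∈ S.erase (t - 1), rexp q t i + rexp q t (t - 1)
        = ∑ i ∈ S, rexp q t i := Finset.sum_erase_add S _ hm
    have hbig : rexp q t (t - 1 + 1) = 1 := by rw [ht1]; simp [rexp]
    have hbig2 : rexp q t (t - 1) = q ^ (t - 1) := by
      have : t - 1 ≠ t := by omega
      simp [rexp, this]
    have hmem : ∀ i ∈ S.erase (t - 1), i < t - 1 := by
      intro i hi
      have hi1 : i ≠ t - 1 := Finset.ne_of_mem_erase hi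
      have hi2 : i < t := Finset.mem_range.mp (hS (Finset.mem_of_mem_erase hi))
      omega
    have h3 : ∑ i ∈ S.erase (t - 1), rexp q t (i + 1)
        = q * ∑ i ∈ S.erase (t - 1), q ^ i := by
      rw [Finset.mul_sum]
      refine Finset.sum_congr rfl fun i hi => ?_
      have : i + 1 ≠ t := by have := hmem i hi; omega
      simp [rexp, this, pow_succ, mul_comm]
    have h4 : ∑ i ∈ S.erase (t - 1), rexp q t i = ∑ i ∈ S.erase (t - 1), q ^ i := by
      refine Finset.sum_congr rfl fun i hi => ?_
      have : i ≠ t := by have := hmem i hi; omega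
      simp [rexp, this]
    set m' := ∑ i ∈ S.erase (t - 1), q ^ i with hm'
    set s := ∑ i ∈ Finset.range (t - 1), q ^ i with hs
    have hgeo : (q - 1) * s + 1 = q ^ (t - 1) := geom_aux q (by omega) (t - 1)
    have hm'le : m' ≤ s := by
      refine Finset.sum_le_sum_of_subset fun i hi => Finset.mem_range.mpr (hmem i hi)
    -- linear facts
    have e1 : q * m' = (q - 1) * m' + m' := by
      have h3' : q - 1 + 1 = q := by omega
      calc q * m' = (q - 1 + 1) * m' := by rw [h3']
        _ = (q - 1) * m' + m' := by ring
    have e2 : (q - 1) * m' ≤ (q - 1) * s := Nat.mul_le_mul_left _ hm'le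
    have e3 : q - 1 ≤ (q - 1) * v := Nat.le_mul_of_pos_right _ hv
    -- combine: q*m' + 1 = (q-1)*v + (m' + q^(t-1))
    omega
  · have hmem : ∀ i ∈ S, i < t - 1 ∨ i = t - 1 := by
      intro i hi
      have := Finset.mem_range.mp (hS hi)
      omega
    have hmem' : ∀ i ∈ S, i < t - 1 := by
      intro i hi
      rcases hmem i hi with h | h
      · exact h
      · exact absurd (h ▸ hi) hm
    have h3 : ∑ i ∈ S, rexp q t (i + 1) = q * ∑ i ∈ S, q ^ i := by
      rw [Finset.mul_sum]
      refine Finset.sum_congr rfl fun i hi => ?_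
      have : i + 1 ≠ t := by have := hmem' i hi; omega
      simp [rexp, this, pow_succ, mul_comm]
    have h4 : ∑ i ∈ S, rexp q t i = ∑ i ∈ S, q ^ i := by
      refine Finset.sum_congr rfl fun i hi => ?_
      have : i ≠ t := by have := hmem' i hi; omega
      simp [rexp, this]
    set m := ∑ i ∈ S, q ^ i with hmdef
    have e1 : q * m = (q - 1) * m + m := by
      have h3' : q - 1 + 1 = q := by omega
      calc q * m = (q - 1 + 1) * m := by rw [h3']
        _ = (q - 1) * m + m := by ring
    have e4 : (q - 1) * m = (q - 1) * v := by omega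
    exact Nat.eq_of_mul_eq_mul_left (by omega) e4

private lemma coeff_prod_binom {K : Type} [CommRing K] (T : ℕ) (u v : ℕ → K)
    (A B : ℕ → ℕ) (S₀ : Finset ℕ) (hS₀ : S₀ ∈ (Finset.range T).powerset) (N : ℕ)
    (hval : ∑ i ∈ S₀, B i + ∑ i ∈ Finset.range T \ S₀, A i = N)
    (huniq : ∀ S ⊆ Finset.range T,
      ∑ i ∈ S, B i + ∑ i ∈ Finset.range T \ S, A i = N → S = S₀) :
    (∏ i ∈ Finset.range T, (Polynomial.C (v i) * Polynomial.X ^ B i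
      + Polynomial.C (u i) * Polynomial.X ^ A i)).coeff N
      = (∏ i ∈ S₀, v i) * ∏ i ∈ Finset.range T \ S₀, u i := by
  rw [Finset.prod_add, Polynomial.finset_sum_coeff]
  have key : ∀ S ∈ (Finset.range T).powerset,
      ((∏ i ∈ S, (Polynomial.C (v i) * Polynomial.X ^ B i)) *
        ∏ i ∈ Finset.range T \ S, (Polynomial.C (u i) * Polynomial.X ^ A i)).coeff N
      = if ∑ i ∈ S, B i + ∑ i ∈ Finset.range T \ S, A i = N
        then (∏ i ∈ S, v i) * ∏ i ∈ Finset.range T \ S, u i else 0 := by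
    intro S hS
    have e1 : (∏ i ∈ S, (Polynomial.C (v i) * Polynomial.X ^ B i))
        = Polynomial.C (∏ i ∈ S, v i) * Polynomial.X ^ (∑ i ∈ S, B i) := by
      rw [Finset.prod_mul_distrib, Finset.prod_pow_eq_pow_sum, ← map_prod]
    have e2 : (∏ i ∈ Finset.range T \ S, (Polynomial.C (u i) * Polynomial.X ^ A i))
        = Polynomial.C (∏ i ∈ Finset.range T \ S, u i) *
          Polynomial.X ^ (∑ i ∈ Finset.range T \ S, A i) := by
      rw [Finset.prod_mul_distrib, Finset.prod_pow_eq_pow_sum, ← map_prod]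
    rw [e1, e2, mul_mul_mul_comm, ← Polynomial.C_mul, ← pow_add,
      Polynomial.coeff_C_mul, Polynomial.coeff_X_pow]
    by_cases hcond : ∑ i ∈ S, B i + ∑ i ∈ Finset.range T \ S, A i = N
    · rw [if_pos hcond, if_pos hcond.symm, mul_one]
    · rw [if_neg hcond, if_neg (fun h => hcond h.symm), mul_zero]
  rw [Finset.sum_congr rfl key, Finset.sum_eq_single S₀]
  · rw [if_pos hval]
  · intro S hS hne
    rw [if_neg fun hc => hne (huniq S (Finset.mem_powerset.mp hS) hc)]
  · intro h; exact absurd hS₀ h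

/-- Key step for uniqueness of transversal points: if
`N(μb + ρμ^q d) = N(μa + ρμ^q c)` for all `μ`, with `ad ≠ bc` and `q ≥ 3`, then
either `b = c = 0` or `a = d = 0`. -/
theorem stmt_14 (p e t q : ℕ) (hp : p.Prime) (he : 0 < e) (ht : 3 ≤ t) (hq3 : 3 ≤ q)
    (hq : q = p ^ e) (K : Type) [Field K] [Fintype K] (hK : Fintype.card K = q ^ t)
    (σ : K ≃+* K) (hσ : ∀ x : K, σ x = x ↔ x ^ q = x)
    (a b c d ρ : K) (hρ : ρ ≠ 0) (habcd : a * d ≠ b * c)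
    (hnorm : ∀ μ : K, (μ * b + ρ * μ ^ q * d) ^ ((q ^ t - 1) / (q - 1))
        = (μ * a + ρ * μ ^ q * c) ^ ((q ^ t - 1) / (q - 1))) :
    (b = 0 ∧ c = 0) ∨ (a = 0 ∧ d = 0) := by
  classical
  have hqne : q ≠ 0 := by omega
  set n := ∑ i ∈ Finset.range t, q ^ i with hn
  have hgs : (q - 1) * n + 1 = q ^ t := geom_aux q (by omega) t
  have hndiv : (q ^ t - 1) / (q - 1) = n := by
    have h1 : q ^ t - 1 = (q - 1) * n := by omega
    rw [h1, Nat.mul_div_cancel_left _ (show 0 < q - 1 by omega)]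
  have hnorm' : ∀ μ : K, (μ * b + ρ * μ ^ q * d) ^ n = (μ * a + ρ * μ ^ q * c) ^ n := by
    intro μ; have h := hnorm μ; rwa [hndiv] at h
  -- characteristic p
  haveI hcharr : CharP K (ringChar K) := ringChar.charP K
  have hrprime : (ringChar K).Prime := CharP.char_is_prime K (ringChar K)
  haveI : Fact (ringChar K).Prime := ⟨hrprime⟩
  obtain ⟨k, -, hcard⟩ := FiniteField.card K (ringChar K)
  have hpr : p = ringChar K := by
    have h1 : p ∣ (ringChar K) ^ (k : ℕ) := by
      rw [← hcard, hK, hq, ← pow_mul]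
      exact dvd_pow_self p (by positivity)
    exact (Nat.prime_dvd_prime_iff_eq hp hrprime).mp (hp.dvd_of_dvd_pow h1)
  haveI hcharp : CharP K p := by rw [hpr]; exact ringChar.charP K
  haveI : Fact p.Prime := ⟨hp⟩
  have hfrob : ∀ (x y : K) (i : ℕ), (x + y) ^ q ^ i = x ^ q ^ i + y ^ q ^ i := by
    intro x y i
    rw [hq, ← pow_mul]
    exact add_pow_char_pow x y p (e * i)
  have hpowcard : ∀ μ : K, μ ^ q ^ t = μ := fun μ => by
    rw [← hK]; exact FiniteField.pow_card μ
  have hμr : ∀ (μ : K) (i : ℕ), i ≤ t → μ ^ rexp q t i = μ ^ q ^ i := by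
    intro μ i hi
    by_cases h : i = t
    · subst h; simp [rexp, hpowcard μ]
    · simp [rexp, h]
  -- evaluation of the reduced polynomials
  have heval : ∀ (x y μ : K),
      Polynomial.eval μ (∏ i ∈ Finset.range t,
        (Polynomial.C ((ρ * y) ^ q ^ i) * Polynomial.X ^ rexp q t (i + 1)
          + Polynomial.C (x ^ q ^ i) * Polynomial.X ^ rexp q t i))
      = (μ * x + ρ * μ ^ q * y) ^ n := by
    intro x y μ
    rw [Polynomial.eval_prod]
    have hfac : ∀ i ∈ Finset.range t,
        Polynomial.eval μ (Polynomial.C ((ρ * y) ^ q ^ i) * Polynomial.X ^ rexp q t (i + 1)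
          + Polynomial.C (x ^ q ^ i) * Polynomial.X ^ rexp q t i)
        = (μ * x + ρ * μ ^ q * y) ^ q ^ i := by
      intro i hi
      have hi' : i < t := Finset.mem_range.mp hi
      simp only [Polynomial.eval_add, Polynomial.eval_mul, Polynomial.eval_C,
        Polynomial.eval_pow, Polynomial.eval_X]
      rw [hμr μ (i + 1) (by omega), hμr μ i (by omega)]
      rw [hfrob (μ * x) (ρ * μ ^ q * y) i]
      have hmu : (μ ^ q) ^ q ^ i = μ ^ q ^ (i + 1) := by rw [← pow_mul, ← pow_succ']
      rw [mul_pow μ x, mul_pow (ρ * μ ^ q) y, mul_pow ρ (μ ^ q), hmu]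
      ring
    rw [Finset.prod_congr rfl hfac, Finset.prod_pow_eq_pow_sum]
  -- the sum of all reduced exponents is n
  have hrexpn : ∑ i ∈ Finset.range t, rexp q t i = n := by
    refine Finset.sum_congr rfl fun i hi => ?_
    have : i ≠ t := Nat.ne_of_lt (Finset.mem_range.mp hi)
    simp [rexp, this]
  have hrexpn' : ∑ i ∈ Finset.range t, rexp q t (i + 1) = n := by
    have ht1 : t - 1 + 1 = t := by omega
    have h1 : ∑ i ∈ Finset.range (t - 1 + 1), rexp q t (i + 1)
        = ∑ i ∈ Finset.range (t - 1), rexp q t (i + 1) + rexp q t (t - 1 + 1) :=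
      Finset.sum_range_succ _ _
    have h2 : ∑ i ∈ Finset.range (t - 1 + 1), rexp q t i
        = ∑ i ∈ Finset.range (t - 1), rexp q t (i + 1) + rexp q t 0 :=
      Finset.sum_range_succ' _ _
    rw [ht1] at h1 h2
    have h3 : rexp q t t = 1 := by simp [rexp]
    have h4 : rexp q t 0 = 1 := by simp [rexp, show (0 : ℕ) ≠ t by omega]
    rw [← hrexpn]
    omega
  -- degree bound
  have hdeg : ∀ (x y : K), (∏ i ∈ Finset.range t,
      (Polynomial.C ((ρ * y) ^ q ^ i) * Polynomial.X ^ rexp q t (i + 1)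
        + Polynomial.C (x ^ q ^ i) * Polynomial.X ^ rexp q t i)).natDegree < q ^ t := by
    intro x y
    have hsumle : (∏ i ∈ Finset.range t,
        (Polynomial.C ((ρ * y) ^ q ^ i) * Polynomial.X ^ rexp q t (i + 1)
          + Polynomial.C (x ^ q ^ i) * Polynomial.X ^ rexp q t i)).natDegree
        ≤ ∑ i ∈ Finset.range t, (rexp q t (i + 1) + rexp q t i) := by
      refine le_trans (Polynomial.natDegree_prod_le _ _) (Finset.sum_le_sum fun i hi => ?_)
      refine le_trans (Polynomial.natDegree_add_le _ _) (max_le ?_ ?_)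
      · exact le_trans (Polynomial.natDegree_C_mul_X_pow_le _ _) (Nat.le_add_right _ _)
      · exact le_trans (Polynomial.natDegree_C_mul_X_pow_le _ _) (Nat.le_add_left _ _)
    have h2 : ∑ i ∈ Finset.range t, (rexp q t (i + 1) + rexp q t i) = n + n := by
      rw [Finset.sum_add_distrib, hrexpn, hrexpn']
    have h3 : 2 * n ≤ (q - 1) * n := Nat.mul_le_mul_right n (by omega)
    omega
  -- the two reduced polynomials are equal
  have hPP : (∏ i ∈ Finset.range t,
        (Polynomial.C ((ρ * d) ^ q ^ i) * Polynomial.X ^ rexp q t (i + 1)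
          + Polynomial.C (b ^ q ^ i) * Polynomial.X ^ rexp q t i))
      = (∏ i ∈ Finset.range t,
        (Polynomial.C ((ρ * c) ^ q ^ i) * Polynomial.X ^ rexp q t (i + 1)
          + Polynomial.C (a ^ q ^ i) * Polynomial.X ^ rexp q t i)) := by
    rw [← sub_eq_zero]
    apply Polynomial.eq_zero_of_natDegree_lt_card_of_eval_eq_zero _ (f := id)
      Function.injective_id
    · intro μ
      simp only [id_eq, Polynomial.eval_sub]
      rw [heval b d μ, heval a c μ, hnorm' μ, sub_self]
    · calc (_ : Polynomial K).natDegree ≤ _ := Polynomial.natDegree_sub_le _ _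
        _ < Fintype.card K := by rw [hK]; exact max_lt (hdeg b d) (hdeg a c)
  -- membership / subset facts
  have hsub0 : ({0} : Finset ℕ) ⊆ Finset.range t := by
    simp [Finset.singleton_subset_iff]; omega
  have hsub01 : ({0, 1} : Finset ℕ) ⊆ Finset.range t := by
    simp [Finset.insert_subset_iff]; omega
  have hq21 : (q - 1) * (q + 1) = q ^ 2 - 1 := by
    rw [Nat.sub_mul, one_mul]
    have h : q * (q + 1) = q ^ 2 + q := by ring
    omega
  -- exponent values
  have hsum0B : ∑ i ∈ ({0} : Finset ℕ), rexp q t (i + 1) = q := by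
    rw [Finset.sum_singleton]
    simp [rexp, show ¬(0 + 1 = t) by omega]
  have hsum0A : ∑ i ∈ ({0} : Finset ℕ), rexp q t i = 1 := by
    rw [Finset.sum_singleton]
    simp [rexp, show ¬(0 = t) by omega]
  have hsdiff0 : ∑ i ∈ Finset.range t \ {0}, rexp q t i
      + ∑ i ∈ ({0} : Finset ℕ), rexp q t i = n := by
    rw [Finset.sum_sdiff hsub0, hrexpn]
  have hsum01B : ∑ i ∈ ({0, 1} : Finset ℕ), rexp q t (i + 1) = q + q ^ 2 := by
    rw [Finset.sum_pair (show (0 : ℕ) ≠ 1 by norm_num)]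
    simp [rexp, show ¬(0 + 1 = t) by omega, show ¬(1 + 1 = t) by omega]
  have hsum01A : ∑ i ∈ ({0, 1} : Finset ℕ), rexp q t i = 1 + q := by
    rw [Finset.sum_pair (show (0 : ℕ) ≠ 1 by norm_num)]
    simp [rexp, show ¬(0 = t) by omega, show ¬(1 = t) by omega]
  have hsdiff01 : ∑ i ∈ Finset.range t \ {0, 1}, rexp q t i
      + ∑ i ∈ ({0, 1} : Finset ℕ), rexp q t i = n := by
    rw [Finset.sum_sdiff hsub01, hrexpn]
  have hq2pos : 1 ≤ q ^ 2 := Nat.one_le_pow _ _ (by omega)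
  -- coefficient extraction for exponent N₁ (subset {0})
  have hval1 : ∑ i ∈ ({0} : Finset ℕ), rexp q t (i + 1)
      + ∑ i ∈ Finset.range t \ {0}, rexp q t i = (q - 1) * 1 + n := by omega
  have huniq1 : ∀ S ⊆ Finset.range t,
      ∑ i ∈ S, rexp q t (i + 1) + ∑ i ∈ Finset.range t \ S, rexp q t i
        = (q - 1) * 1 + n → S = {0} := by
    intro S hSsub hSeq
    refine subset_sum_one (by omega) (q := q)
      (exp_unique q t 1 hq3 (by omega) one_pos S hSsub ?_)
    rw [hrexpn]; exact hSeq
  have hval2 : ∑ i ∈ ({0, 1} : Finset ℕ), rexp q t (i + 1)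
      + ∑ i ∈ Finset.range t \ {0, 1}, rexp q t i = (q - 1) * (q + 1) + n := by omega
  have huniq2 : ∀ S ⊆ Finset.range t,
      ∑ i ∈ S, rexp q t (i + 1) + ∑ i ∈ Finset.range t \ S, rexp q t i
        = (q - 1) * (q + 1) + n → S = {0, 1} := by
    intro S hSsub hSeq
    refine subset_sum_q1 (by omega) (q := q)
      (exp_unique q t (q + 1) hq3 (by omega) (by omega) S hSsub ?_)
    rw [hrexpn]; exact hSeq
  have hcoePb1 := coeff_prod_binom t (fun i => b ^ q ^ i) (fun i => (ρ * d) ^ q ^ i)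
      (fun i => rexp q t i) (fun i => rexp q t (i + 1)) {0}
      (Finset.mem_powerset.mpr hsub0) ((q - 1) * 1 + n) hval1 huniq1
  have hcoePa1 := coeff_prod_binom t (fun i => a ^ q ^ i) (fun i => (ρ * c) ^ q ^ i)
      (fun i => rexp q t i) (fun i => rexp q t (i + 1)) {0}
      (Finset.mem_powerset.mpr hsub0) ((q - 1) * 1 + n) hval1 huniq1
  have hcoePb2 := coeff_prod_binom t (fun i => b ^ q ^ i) (fun i => (ρ * d) ^ q ^ i)
      (fun i => rexp q t i) (fun i => rexp q t (i + 1)) {0, 1}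
      (Finset.mem_powerset.mpr hsub01) ((q - 1) * (q + 1) + n) hval2 huniq2
  have hcoePa2 := coeff_prod_binom t (fun i => a ^ q ^ i) (fun i => (ρ * c) ^ q ^ i)
      (fun i => rexp q t i) (fun i => rexp q t (i + 1)) {0, 1}
      (Finset.mem_powerset.mpr hsub01) ((q - 1) * (q + 1) + n) hval2 huniq2
  have E1 : (∏ i ∈ ({0} : Finset ℕ), (ρ * d) ^ q ^ i)
        * ∏ i ∈ Finset.range t \ {0}, b ^ q ^ i
      = (∏ i ∈ ({0} : Finset ℕ), (ρ * c) ^ q ^ i)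
        * ∏ i ∈ Finset.range t \ {0}, a ^ q ^ i := by
    rw [← hcoePb1, ← hcoePa1, hPP]
  have E2 : (∏ i ∈ ({0, 1} : Finset ℕ), (ρ * d) ^ q ^ i)
        * ∏ i ∈ Finset.range t \ {0, 1}, b ^ q ^ i
      = (∏ i ∈ ({0, 1} : Finset ℕ), (ρ * c) ^ q ^ i)
        * ∏ i ∈ Finset.range t \ {0, 1}, a ^ q ^ i := by
    rw [← hcoePb2, ← hcoePa2, hPP]
  simp only [Finset.prod_singleton, pow_zero, pow_one] at E1
  rw [Finset.prod_pair (show (0 : ℕ) ≠ 1 by norm_num),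
      Finset.prod_pair (show (0 : ℕ) ≠ 1 by norm_num)] at E2
  simp only [pow_zero, pow_one] at E2
  -- split the product over range t \ {0}
  have h1mem : 1 ∈ Finset.range t \ {0} := by simp; omega
  have h2mem : 2 ∈ Finset.range t \ ({0, 1} : Finset ℕ) := by simp; omega
  have hsd : (Finset.range t \ {0}).erase 1 = Finset.range t \ {0, 1} := by
    ext x
    simp only [Finset.mem_erase, Finset.mem_sdiff, Finset.mem_range, Finset.mem_singleton,
      Finset.mem_insert]
    tauto
  have hsplit : ∀ x : K, ∏ i ∈ Finset.range t \ {0}, x ^ q ^ i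
      = x ^ q * ∏ i ∈ Finset.range t \ {0, 1}, x ^ q ^ i := by
    intro x
    rw [← Finset.mul_prod_erase _ _ h1mem, hsd, pow_one]
  rw [hsplit b, hsplit a] at E1
  -- now the final algebra
  by_cases hb : b = 0
  · have hQb0 : (∏ i ∈ Finset.range t \ ({0, 1} : Finset ℕ), b ^ q ^ i) = 0 :=
      Finset.prod_eq_zero h2mem (by rw [hb]; exact zero_pow (pow_ne_zero _ hqne))
    rw [hQb0, hb] at E1
    have E1' : ρ * c * (a ^ q * ∏ i ∈ Finset.range t \ ({0, 1} : Finset ℕ), a ^ q ^ i)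
        = 0 := by rw [← E1]; ring
    rcases mul_eq_zero.mp E1' with h | h
    · rcases mul_eq_zero.mp h with h' | h'
      · exact absurd h' hρ
      · exact Or.inl ⟨hb, h'⟩
    · have ha : a = 0 := by
        rcases mul_eq_zero.mp h with h' | h'
        · exact pow_eq_zero_iff hqne |>.mp h'
        · obtain ⟨i, -, hi⟩ := Finset.prod_eq_zero_iff.mp h'
          exact pow_eq_zero_iff (pow_ne_zero _ hqne) |>.mp hi
      exact absurd (by rw [ha, hb, zero_mul, zero_mul]) habcd
  · have hQb : (∏ i ∈ Finset.range t \ ({0, 1} : Finset ℕ), b ^ q ^ i) ≠ 0 :=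
      Finset.prod_ne_zero_iff.mpr fun i _ => pow_ne_zero _ hb
    have hbq : b ^ q ≠ 0 := pow_ne_zero _ hb
    by_cases ha : a = 0
    · have hQa0 : a ^ q * (∏ i ∈ Finset.range t \ ({0, 1} : Finset ℕ), a ^ q ^ i) = 0 := by
        rw [ha, zero_pow hqne, zero_mul]
      rw [hQa0, mul_zero] at E1
      have hd : d = 0 := by
        rcases mul_eq_zero.mp E1 with h | h
        · rcases mul_eq_zero.mp h with h' | h'
          · exact absurd h' hρ
          · exact h'
        · exact absurd h (mul_ne_zero hbq hQb)
      exact Or.inr ⟨ha, hd⟩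
    · have hQa : (∏ i ∈ Finset.range t \ ({0, 1} : Finset ℕ), a ^ q ^ i) ≠ 0 :=
        Finset.prod_ne_zero_iff.mpr fun i _ => pow_ne_zero _ ha
      have haq : a ^ q ≠ 0 := pow_ne_zero _ ha
      by_cases hd : d = 0
      · rw [hd, mul_zero, zero_mul] at E1
        have hc : c = 0 := by
          rcases mul_eq_zero.mp E1.symm with h | h
          · rcases mul_eq_zero.mp h with h' | h'
            · exact absurd h' hρ
            · exact h'
          · exact absurd h (mul_ne_zero haq hQa)
        exact absurd (by rw [hd, hc, mul_zero, mul_zero]) habcd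
      · -- main case: derive (a*d)^q = (b*c)^q, contradiction
        have hc : c ≠ 0 := by
          intro hc0
          have hzero : ρ * d * (ρ * d) ^ q
              * ∏ i ∈ Finset.range t \ ({0, 1} : Finset ℕ), b ^ q ^ i = 0 := by
            rw [E2, hc0]
            simp [zero_pow hqne]
          exact (mul_ne_zero (mul_ne_zero (mul_ne_zero hρ hd)
            (pow_ne_zero _ (mul_ne_zero hρ hd))) hQb) hzero
        have h6 : ρ * c * (a ^ q * ∏ i ∈ Finset.range t \ ({0, 1} : Finset ℕ), a ^ q ^ i)
              * (ρ * d) ^ q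
            = ρ * c * ((ρ * c) ^ q
              * ∏ i ∈ Finset.range t \ ({0, 1} : Finset ℕ), a ^ q ^ i) * b ^ q := by
          calc ρ * c * (a ^ q * ∏ i ∈ Finset.range t \ ({0, 1} : Finset ℕ), a ^ q ^ i)
                * (ρ * d) ^ q
              = ρ * d * (b ^ q * ∏ i ∈ Finset.range t \ ({0, 1} : Finset ℕ), b ^ q ^ i)
                * (ρ * d) ^ q := by rw [E1]
            _ = (ρ * d * (ρ * d) ^ q
                * ∏ i ∈ Finset.range t \ ({0, 1} : Finset ℕ), b ^ q ^ i) * b ^ q := by ring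
            _ = (ρ * c * (ρ * c) ^ q
                * ∏ i ∈ Finset.range t \ ({0, 1} : Finset ℕ), a ^ q ^ i) * b ^ q := by rw [E2]
            _ = ρ * c * ((ρ * c) ^ q
                * ∏ i ∈ Finset.range t \ ({0, 1} : Finset ℕ), a ^ q ^ i) * b ^ q := by ring
        have h7 : (ρ * c * ∏ i ∈ Finset.range t \ ({0, 1} : Finset ℕ), a ^ q ^ i)
              * (a ^ q * (ρ * d) ^ q)
            = (ρ * c * ∏ i ∈ Finset.range t \ ({0, 1} : Finset ℕ), a ^ q ^ i)
              * ((ρ * c) ^ q * b ^ q) := by linear_combination h6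
        have h8 : a ^ q * (ρ * d) ^ q = (ρ * c) ^ q * b ^ q :=
          mul_left_cancel₀ (mul_ne_zero (mul_ne_zero hρ hc) hQa) h7
        have h9 : ρ ^ q * (a * d) ^ q = ρ ^ q * (b * c) ^ q := by
          rw [mul_pow ρ d, mul_pow ρ c] at h8
          rw [mul_pow a d, mul_pow b c]
          linear_combination h8
        have h10 : (a * d) ^ q = (b * c) ^ q :=
          mul_left_cancel₀ (pow_ne_zero q hρ) h9
        have h12 : (a * d - b * c) ^ q = 0 := by
          rw [hq, sub_pow_char_pow, ← hq, h10, sub_self]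
        exact absurd (sub_eq_zero.mp (pow_eq_zero_iff hqne |>.mp h12)) habcd
end

section
/- Let t ≥ 2 and let f : U₁ → U₂ be an invertible σ-semilinear map between n-dimensional F_{q^t}-vector spaces, where σ ∈ Aut(F_{q^t}) has fixed field F_q. For each nonzero u ∈ U₁, the intersection of the F_q-subspace W = {v + f(v) : v ∈ U₁} of U₁ ⊕ U₂ with the 2-dimensional F_{q^t}-subspace span_{F_{q^t}}(u, f(u)) equals { λu + σ(λ)f(u) : λ ∈ F_{q^t} }, which is an F_q-subspace of F_q-dimension t. -/
/-- The intersection of `W = {v + f(v)}` with the line `span{u, f(u)}` (for `u ≠ 0`)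
equals `{λu + σ(λ)f(u) : λ}`, an `F_q`-subspace with `q^t` elements (dimension `t`). -/
theorem stmt_15 (p e t n q : ℕ) (hp : p.Prime) (he : 0 < e) (ht : 2 ≤ t) (hn : 1 ≤ n)
    (hq : q = p ^ e) (K : Type) [Field K] [Fintype K] (hK : Fintype.card K = q ^ t)
    (U₁ U₂ : Type) [AddCommGroup U₁] [Module K U₁] [AddCommGroup U₂] [Module K U₂]
    (hn1 : Module.finrank K U₁ = n) (hn2 : Module.finrank K U₂ = n)
    (σ : K ≃+* K) (hσ : ∀ x : K, σ x = x ↔ x ^ q = x)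
    (f : U₁ → U₂) (hfbij : Function.Bijective f)
    (hfadd : ∀ u v : U₁, f (u + v) = f u + f v)
    (hfsemi : ∀ (lam : K) (u : U₁), f (lam • u) = σ lam • f u) :
    ∀ u : U₁, u ≠ 0 →
      ({w : U₁ × U₂ | ∃ v : U₁, w = (v, f v)} ∩
          (Submodule.span K {((u, (0 : U₂)) : U₁ × U₂), (((0 : U₁), f u) : U₁ × U₂)} :
            Set (U₁ × U₂)))
        = {w : U₁ × U₂ | ∃ lam : K, w = (lam • u, σ lam • f u)} ∧
      ({w : U₁ × U₂ | ∃ lam : K, w = (lam • u, σ lam • f u)}).ncard = q ^ t := by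
  intro u hu
  have hf0 : f 0 = 0 := by
    have h := hfadd 0 0
    rw [add_zero] at h
    exact (add_eq_right.mp h.symm)
  have hfu : f u ≠ 0 := by
    intro h
    exact hu (hfbij.injective (h.trans hf0.symm))
  constructor
  · ext w
    constructor
    · rintro ⟨⟨v, rfl⟩, hmem⟩
      obtain ⟨a, b, hab⟩ := Submodule.mem_span_pair.mp hmem
      simp only [Prod.smul_mk, smul_zero, Prod.mk_add_mk, add_zero, zero_add,
        Prod.mk.injEq] at hab
      obtain ⟨h1, h2⟩ := hab
      refine ⟨a, ?_⟩
      have : σ a • f u = f v := by rw [← hfsemi, h1]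
      rw [Prod.mk.injEq]
      exact ⟨h1.symm, this.symm⟩
    · rintro ⟨lam, rfl⟩
      refine ⟨⟨lam • u, by rw [hfsemi]⟩, ?_⟩
      apply Submodule.mem_span_pair.mpr
      exact ⟨lam, σ lam, by simp⟩
  · have hinj : Function.Injective (fun lam : K => ((lam • u, σ lam • f u) : U₁ × U₂)) := by
      intro a b hab
      have h1 : a • u = b • u := congrArg Prod.fst hab
      have := sub_eq_zero.mpr h1
      rw [← sub_smul] at this
      rcases smul_eq_zero.mp this with h | h
      · exact sub_eq_zero.mp h
      · exact absurd h hu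
    have hset : {w : U₁ × U₂ | ∃ lam : K, w = (lam • u, σ lam • f u)}
        = Set.range (fun lam : K => ((lam • u, σ lam • f u) : U₁ × U₂)) := by
      ext w; simp [eq_comm]
    rw [hset, ← Nat.card_coe_set_eq, Nat.card_range_of_injective hinj,
      Nat.card_eq_fintype_card, hK]
end
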